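/- arXiv:1511.03370 — 3 statements merged into one kernel-verified Lean document; each statement's English description precedes it below -/
import Mathlib

section
/- Let S = {φ₁,…,φ_s} ⊆ P be an almost strongly tight set of finite cardinality s > 1. Then S is strongly tight if and only if Σ_S = 0. -/
/-!
Over `𝔽₂` every element of `⟨S⟩` is a subset sum, and
`∑_{T ⊆ S} ∑_{v ∈ T} v = 2^{|S|-1} ∑_{v ∈ S} v` vanishes once `|S| > 1`. For a proper subset `T`,
strong tightness of `T` forces `p_T = ∑_{v ∈ T} v`, so `Σ_S = p_S + ∑_{v ∈ S} v`. Hence `Σ_S = 0`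
iff `∑_{v ∈ S} v = p_S ∈ P`, and since every other subset sum already lies in `P`, this is
exactly strong tightness of `S`.
-/

open Finset

namespace ZModModule

variable {V : Type*} [AddCommGroup V] [Module (ZMod 2) V]

lemma add_eq_zero_iff_eq {x y : V} : x + y = 0 ↔ x = y := by
  rw [add_eq_zero_iff_eq_neg, neg_eq_self]

lemma sum_powerset_sum_eq_zero {α : Type*} [DecidableEq α] {s : Finset α} (hs : 1 < #s)
    (f : α → V) : ∑ t ∈ s.powerset, ∑ x ∈ t, f x = 0 := by
  obtain ⟨a, ha⟩ := card_pos.1 (by omega : 0 < #s)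
  have hsum_insert : ∀ t ∈ (s.erase a).powerset, ∑ x ∈ insert a t, f x = f a + ∑ x ∈ t, f x :=
    fun t ht => sum_insert fun hat => notMem_erase a s (mem_powerset.1 ht hat)
  obtain ⟨m, hm⟩ : ∃ m, #(s.erase a) = m + 1 :=
    ⟨#(s.erase a) - 1, by rw [card_erase_of_mem ha]; omega⟩
  rw [← insert_erase ha, sum_powerset_insert (notMem_erase a s), sum_congr rfl hsum_insert,
    sum_add_distrib, sum_const, card_powerset, add_left_comm, add_self, add_zero, hm, pow_succ,
    mul_smul, char_nsmul_eq_zero 2, smul_zero]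

lemma mem_span_finset_iff_exists_sum {s : Finset V} {v : V} :
    v ∈ Submodule.span (ZMod 2) (s : Set V) ↔ ∃ t ⊆ s, ∑ x ∈ t, x = v := by
  classical
  refine ⟨fun hv => ?_, ?_⟩
  · obtain ⟨c, -, rfl⟩ := Submodule.mem_span_finset.1 hv
    refine ⟨s.filter (c · = 1), filter_subset _ _, ?_⟩
    rw [sum_filter]
    refine sum_congr rfl fun x _ => ?_
    rcases (by generalize c x = b; revert b; decide : c x = 0 ∨ c x = 1) with h | h <;> simp [h]
  · rintro ⟨t, hts, rfl⟩
    exact Submodule.sum_mem _ fun x hx => Submodule.subset_span (hts hx)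

end ZModModule

section TightSets

open ZModModule

variable {V : Type*} [AddCommGroup V] [Module (ZMod 2) V]

def IsStronglyTight (P : Set V) (S : Finset V) : Prop :=
  ∀ v ∈ Submodule.span (ZMod 2) (S : Set V), v ∈ P

variable {U : Submodule (ZMod 2) V} {P : Set V} {S : Finset V}

lemma isStronglyTight_iff_sum_mem (hproper : ∀ T ⊂ S, IsStronglyTight P T) :
    IsStronglyTight P S ↔ ∑ v ∈ S, v ∈ P := by
  refine ⟨fun hS => hS _ (mem_span_finset_iff_exists_sum.2 ⟨S, subset_rfl, rfl⟩), ?_⟩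
  intro hsum v hv
  obtain ⟨T, hTS, rfl⟩ := mem_span_finset_iff_exists_sum.1 hv
  rcases hTS.eq_or_ssubset with rfl | hT
  · exact hsum
  · exact hproper T hT _ (mem_span_finset_iff_exists_sum.2 ⟨T, subset_rfl, rfl⟩)

lemma sum_powerset_rep_eq_rep_add_sum (hPunique : ∀ p ∈ P, ∀ q ∈ P, p - q ∈ U → p = q)
    (hproper : ∀ T ⊂ S, IsStronglyTight P T) {rep : Finset V → V}
    (hrep : ∀ T ⊆ S, rep T ∈ P ∧ (∑ v ∈ T, v) - rep T ∈ U) (hS : 1 < #S) :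
    ∑ T ∈ S.powerset, rep T = rep S + ∑ v ∈ S, v := by
  classical
  have hrep_proper : ∀ T ∈ S.powerset.erase S, rep T = ∑ v ∈ T, v := by
    intro T hT
    have hTS : T ⊂ S := (mem_powerset.1 (mem_of_mem_erase hT)).ssubset_of_ne (ne_of_mem_erase hT)
    have hsumP := hproper T hTS _ (mem_span_finset_iff_exists_sum.2 ⟨T, subset_rfl, rfl⟩)
    exact (hPunique _ hsumP _ (hrep T hTS.subset).1 (hrep T hTS.subset).2).symm
  have hzero : ∑ T ∈ S.powerset, ∑ v ∈ T, v = 0 := sum_powerset_sum_eq_zero hS id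
  rw [← add_sum_erase _ _ (mem_powerset_self S), add_eq_zero_iff_eq] at hzero
  rw [← add_sum_erase _ _ (mem_powerset_self S), sum_congr rfl hrep_proper, hzero]

end TightSets

theorem almostStronglyTight_stronglyTight_iff_sigma_zero_general
    {V : Type*} [AddCommGroup V] [Module (ZMod 2) V]
    (U : Submodule (ZMod 2) V) (P : Set V)
    (hPunique : ∀ p ∈ P, ∀ q ∈ P, p - q ∈ U → p = q)
    (S : Finset V) (hScard : 1 < S.card)
    (hAST : ∀ S' : Finset V, S' ⊂ S →
      ∀ v ∈ Submodule.span (ZMod 2) (S' : Set V), v ∈ P)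
    (rep : Finset V → V)
    (hrep : ∀ S' ⊆ S, rep S' ∈ P ∧ (∑ v ∈ S', v) - rep S' ∈ U) :
    (∀ v ∈ Submodule.span (ZMod 2) (S : Set V), v ∈ P) ↔
      ∑ S' ∈ S.powerset, rep S' = 0 := by
  change IsStronglyTight P S ↔ _
  rw [isStronglyTight_iff_sum_mem hAST, sum_powerset_rep_eq_rep_add_sum hPunique hAST hrep hScard,
    ZModModule.add_eq_zero_iff_eq]
  obtain ⟨hrepP, hrepU⟩ := hrep S subset_rfl
  exact ⟨fun hsumP => (hPunique _ hsumP _ hrepP hrepU).symm, fun hrepS => hrepS ▸ hrepP⟩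

/-- Proposition 7.1: Let `V` be a vector space over `𝔽₂`, `U ⊆ V` a
subspace, and `P ⊆ V` a spanning set with `0 ∈ P`, such that every coset of `U` contains
at most one element of `P`.  A finite set `S ⊆ V` is *tight* if `⟨S⟩ ⊆ P + U`, and
*strongly tight* if `⟨S⟩ ⊆ P`; for each `T ⊆ S`, `p_T` denotes the unique element of `P`
in the coset `(∑_{v ∈ T} v) + U`, and `Σ_S = ∑_{T ⊆ S} p_T`.  If `S = {φ₁,…,φ_s}` is
almost strongly tight (tight, with every proper subset strongly tight) of cardinality
`s > 1`, then `S` is strongly tight if and only if `Σ_S = 0`. -/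
theorem almostStronglyTight_stronglyTight_iff_sigma_zero
    {V : Type*} [AddCommGroup V] [Module (ZMod 2) V]
    (U : Submodule (ZMod 2) V) (P : Set V)
    (hP0 : (0 : V) ∈ P) (hPspan : Submodule.span (ZMod 2) P = ⊤)
    (hPunique : ∀ p ∈ P, ∀ q ∈ P, p - q ∈ U → p = q)
    (S : Finset V) (hScard : 1 < S.card) (hSP : (S : Set V) ⊆ P)
    (htight : ∀ v ∈ Submodule.span (ZMod 2) (S : Set V), ∃ p ∈ P, v - p ∈ U)
    (hAST : ∀ S' : Finset V, S' ⊂ S →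
      ∀ v ∈ Submodule.span (ZMod 2) (S' : Set V), v ∈ P)
    (rep : Finset V → V)
    (hrep : ∀ S' ⊆ S, rep S' ∈ P ∧ (∑ v ∈ S', v) - rep S' ∈ U) :
    (∀ v ∈ Submodule.span (ZMod 2) (S : Set V), v ∈ P) ↔
      ∑ S' ∈ S.powerset, rep S' = 0 :=
  almostStronglyTight_stronglyTight_iff_sigma_zero_general U P hPunique S hScard hAST rep hrep
end

section
/- Let s > 1 and let S = {φ₁,…,φ_s} ⊆ P be a tight set. Then S is strongly tight if and only if Σ_{S'} = 0 for every subset S' ⊆ S of cardinality greater than 1. -/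
section Aux

variable {V : Type*} [AddCommGroup V] [Module (ZMod 2) V]

private lemma char2_aux (x : V) : x + x = 0 := by
  have h : ((1 : ZMod 2) + 1) • x = 0 := by
    have : (1 : ZMod 2) + 1 = 0 := by decide
    rw [this, zero_smul]
  simpa [add_smul] using h

private lemma mem_span_finset_char2 [DecidableEq V]
    (S : Finset V) {v : V} (hv : v ∈ Submodule.span (ZMod 2) (S : Set V)) :
    ∃ T ⊆ S, v = ∑ x ∈ T, x := by
  induction hv using Submodule.span_induction with
  | mem x hx => exact ⟨{x}, by simpa using hx, by simp⟩
  | zero => exact ⟨∅, by simp, by simp⟩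
  | add x y hx hy ihx ihy =>
    obtain ⟨T1, hT1, rfl⟩ := ihx
    obtain ⟨T2, hT2, rfl⟩ := ihy
    refine ⟨(T1 ∪ T2) \ (T1 ∩ T2), ?_, ?_⟩
    · exact Finset.Subset.trans (Finset.sdiff_subset) (Finset.union_subset hT1 hT2)
    · have hd : Disjoint ((T1 ∪ T2) \ (T1 ∩ T2)) (T1 ∩ T2) := Finset.sdiff_disjoint
      have hu : ((T1 ∪ T2) \ (T1 ∩ T2)) ∪ (T1 ∩ T2) = T1 ∪ T2 :=
        Finset.sdiff_union_of_subset Finset.inter_subset_union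
      have h1 : (∑ x ∈ T1 ∪ T2, x) + ∑ x ∈ T1 ∩ T2, x
          = (∑ x ∈ T1, x) + ∑ x ∈ T2, x := Finset.sum_union_inter
      have h2 : (∑ x ∈ T1 ∪ T2, x)
          = (∑ x ∈ (T1 ∪ T2) \ (T1 ∩ T2), x) + ∑ x ∈ T1 ∩ T2, x := by
        rw [← Finset.sum_union hd, hu]
      rw [← h1, h2, add_assoc, char2_aux, add_zero]
  | smul a x hx ihx =>
    obtain ⟨T, hT, rfl⟩ := ihx
    have ha : a = 0 ∨ a = 1 := (by decide : ∀ b : ZMod 2, b = 0 ∨ b = 1) a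
    rcases ha with rfl | rfl
    · exact ⟨∅, by simp, by simp⟩
    · exact ⟨T, hT, by simp⟩

private lemma sum_powerset_sum_char2 [DecidableEq V]
    (S' : Finset V) (h : 2 ≤ S'.card) :
    ∑ T ∈ S'.powerset, ∑ x ∈ T, x = 0 := by
  obtain ⟨a, ha⟩ : S'.Nonempty := Finset.card_pos.mp (by omega)
  have hins : S' = insert a (S'.erase a) := (Finset.insert_erase ha).symm
  have hna : a ∉ S'.erase a := Finset.notMem_erase a S'
  rw [hins, Finset.sum_powerset_insert hna]
  have hstep : ∀ t ∈ (S'.erase a).powerset,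
      (∑ x ∈ insert a t, x) = a + ∑ x ∈ t, x := by
    intro t ht
    have hat : a ∉ t := fun hc => hna (Finset.mem_powerset.mp ht hc)
    rw [Finset.sum_insert hat]
  rw [Finset.sum_congr rfl hstep, Finset.sum_add_distrib, Finset.sum_const]
  have hcard : (S'.erase a).powerset.card = 2 ^ (S'.erase a).card :=
    Finset.card_powerset _
  have hpos : 1 ≤ (S'.erase a).card := by
    have := Finset.card_erase_of_mem ha
    omega
  have hzero : (S'.erase a).powerset.card • a = 0 := by
    rw [hcard]
    obtain ⟨k, hk⟩ : ∃ k, (S'.erase a).card = k + 1 := ⟨_, (Nat.succ_pred_eq_of_pos hpos).symm⟩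
    rw [hk, pow_succ, mul_smul, two_smul, char2_aux, smul_zero]
  rw [hzero, zero_add, ← Finset.sum_add_distrib]
  refine Finset.sum_eq_zero fun t ht => char2_aux _

end Aux

/-- Theorem 7.2: Let `V` be a vector space over `𝔽₂`, `U ⊆ V` a
subspace, and `P ⊆ V` a spanning set with `0 ∈ P`, such that every coset of `U` contains
at most one element of `P`.  A set `S ⊆ V` is *tight* if `⟨S⟩ ⊆ P + U` and *strongly
tight* if `⟨S⟩ ⊆ P`; for each `T`, `p_T` denotes the unique element of `P` in the coset
`(∑_{v ∈ T} v) + U`, and `Σ_T = ∑_{T' ⊆ T} p_{T'}`.  If `S = {φ₁,…,φ_s}` is a tight set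
of cardinality `s > 1`, then `S` is strongly tight if and only if `Σ_{S'} = 0` for every
subset `S' ⊆ S` of cardinality greater than 1. -/
theorem tight_stronglyTight_iff_all_sigma_zero
    {V : Type*} [AddCommGroup V] [Module (ZMod 2) V]
    (U : Submodule (ZMod 2) V) (P : Set V)
    (hP0 : (0 : V) ∈ P) (hPspan : Submodule.span (ZMod 2) P = ⊤)
    (hPunique : ∀ p ∈ P, ∀ q ∈ P, p - q ∈ U → p = q)
    (S : Finset V) (hScard : 1 < S.card) (hSP : (S : Set V) ⊆ P)
    (htight : ∀ v ∈ Submodule.span (ZMod 2) (S : Set V), ∃ p ∈ P, v - p ∈ U)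
    (rep : Finset V → V)
    (hrep : ∀ S' ⊆ S, rep S' ∈ P ∧ (∑ v ∈ S', v) - rep S' ∈ U) :
    (∀ v ∈ Submodule.span (ZMod 2) (S : Set V), v ∈ P) ↔
      ∀ S' ⊆ S, 1 < S'.card → ∑ S'' ∈ S'.powerset, rep S'' = 0 := by
  classical
  constructor
  · intro h S' hS' hcard
    have hrepeq : ∀ T ⊆ S, rep T = ∑ x ∈ T, x := by
      intro T hT
      have hmem : (∑ x ∈ T, x) ∈ Submodule.span (ZMod 2) (S : Set V) :=
        Submodule.sum_mem _ fun x hx => Submodule.subset_span (hT hx)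
      have hp := hrep T hT
      have hU : rep T - ∑ x ∈ T, x ∈ U := by
        have := U.neg_mem hp.2
        rwa [neg_sub] at this
      exact hPunique _ hp.1 _ (h _ hmem) hU
    calc ∑ T ∈ S'.powerset, rep T = ∑ T ∈ S'.powerset, ∑ x ∈ T, x :=
          Finset.sum_congr rfl fun T hT =>
            hrepeq T ((Finset.mem_powerset.mp hT).trans hS')
      _ = 0 := sum_powerset_sum_char2 S' hcard
  · intro h
    have key : ∀ n (T : Finset V), T.card = n → T ⊆ S → rep T = ∑ x ∈ T, x := by
      intro n
      induction n using Nat.strong_induction_on with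
      | _ n ih =>
        intro T hc hTS
        have hp := hrep T hTS
        rcases Nat.lt_or_ge T.card 2 with hlt | hge
        · have h01 : T.card = 0 ∨ T.card = 1 := by omega
          rcases h01 with h0 | h1
          · have hTe : T = ∅ := Finset.card_eq_zero.mp h0
            subst hTe
            have hU : rep (∅ : Finset V) - ∑ x ∈ (∅ : Finset V), x ∈ U := by
              have := U.neg_mem hp.2
              rwa [neg_sub] at this
            exact hPunique _ hp.1 _ (by simpa using hP0) hU
          · obtain ⟨a, rfl⟩ := Finset.card_eq_one.mp h1
            have haP : a ∈ P := hSP (hTS (Finset.mem_singleton_self a))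
            have hU : rep ({a} : Finset V) - ∑ x ∈ ({a} : Finset V), x ∈ U := by
              have := U.neg_mem hp.2
              rwa [neg_sub] at this
            exact hPunique _ hp.1 _ (by simpa using haP) hU
        · have h0 := h T hTS (by omega)
          have hihall : ∀ T' ∈ T.powerset.erase T, rep T' = ∑ x ∈ T', x := by
            intro T' hT'
            rw [Finset.mem_erase, Finset.mem_powerset] at hT'
            have hss : T' ⊂ T := Finset.ssubset_iff_subset_ne.mpr ⟨hT'.2, hT'.1⟩
            have hlt' : T'.card < n := hc ▸ Finset.card_lt_card hss
            exact ih T'.card hlt' T' rfl (hT'.2.trans hTS)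
          have hsplit : ∑ T' ∈ T.powerset, rep T'
              = rep T + ∑ T' ∈ T.powerset.erase T, rep T' :=
            (Finset.add_sum_erase _ _ (Finset.mem_powerset_self T)).symm
          have hsplit2 : ∑ T' ∈ T.powerset, (∑ x ∈ T', x)
              = (∑ x ∈ T, x) + ∑ T' ∈ T.powerset.erase T, ∑ x ∈ T', x :=
            (Finset.add_sum_erase _ _ (Finset.mem_powerset_self T)).symm
          have hA : ∑ T' ∈ T.powerset.erase T, rep T'
              = ∑ T' ∈ T.powerset.erase T, ∑ x ∈ T', x :=
            Finset.sum_congr rfl hihall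
          have e1 : rep T + (∑ T' ∈ T.powerset.erase T, ∑ x ∈ T', x) = 0 := by
            rw [← hA, ← hsplit]; exact h0
          have e2 : (∑ x ∈ T, x) + (∑ T' ∈ T.powerset.erase T, ∑ x ∈ T', x) = 0 := by
            rw [← hsplit2]; exact sum_powerset_sum_char2 T hge
          exact add_right_cancel (e1.trans e2.symm)
    intro v hv
    obtain ⟨T, hT, rfl⟩ := mem_span_finset_char2 S hv
    rw [← key T.card T rfl hT]
    exact (hrep T hT).1
end

section
/- Let F be a field of characteristic 2 with a valuation ν : F^× → Γ to a totally ordered abelian group Γ. Fix k ≥ 1 and β₁,…,β_k ∈ F^× such that ν(β₁) < 0 and the images of ν(β₁),…,ν(β_k) in Γ/2Γ are linearly independent over 𝔽₂. Let φ = ⟪β_k,…,β₂,β₁]] be the quadratic k-fold Pfister form on the 2^k-dimensional space W with its monomial basis {e_𝐢 : 𝐢 ∈ {0,1}^k}. Then: (1) for every nonzero w = Σ_𝐢 w_𝐢 e_𝐢 ∈ W, ν(φ(w)) = ν(φ(w_𝐢 e_𝐢)) for some index 𝐢 with w_𝐢 ≠ 0; (2) φ is anisotropic; (3) the set of classes modulo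 2Γ of the values ν(φ(w)) (w ranging over vectors with φ(w) ≠ 0) is exactly the 𝔽₂-subspace of Γ/2Γ spanned by ν(β₁),…,ν(β_k). -/
/-- The quadratic `(m+1)`-fold Pfister form `⟪β_{m+1},…,β₂,β₁]]` on the
`2^(m+1)`-dimensional space `W` with monomial basis indexed by `Fin (m+1) → Bool`,
defined inductively: `φ₁(w₀e₀ + w₁e₁) = w₀² + w₀w₁ + β₁w₁²` and
`φ_{j+1}(e₀ ⊗ w₀ + e₁ ⊗ w₁) = φ_j(w₀) + β_{j+1}·φ_j(w₁)`.
Here `β i` is `β_{i+1}`, and a vector is a coefficient function on the monomial basis. -/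
def pfisterFun {F : Type*} [Field F] :
    (m : ℕ) → (Fin (m + 1) → F) → ((Fin (m + 1) → Bool) → F) → F
  | 0, β, w =>
      (w fun _ => false) ^ 2 + (w fun _ => false) * (w fun _ => true) +
        β 0 * (w fun _ => true) ^ 2
  | (j + 1), β, w =>
      pfisterFun j (fun i => β i.castSucc) (fun t => w (Fin.snoc t false)) +
        β (Fin.last (j + 1)) * pfisterFun j (fun i => β i.castSucc) (fun t => w (Fin.snoc t true))

/-- The subgroup `2Γ` of a totally ordered abelian group `Γ`. -/
def twoSubgroup (Γ : Type*) [AddCommGroup Γ] : AddSubgroup Γ :=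
  AddSubgroup.closure {g : Γ | ∃ h : Γ, g = h + h}

/-! Each monomial value `ν(c² ∏_{j ∈ 𝐢} β_j)` lies in the class `∑_{j ∈ 𝐢} ν(β_j)` of `Γ/2Γ`, so
by the independence hypothesis monomials at distinct indices have distinct valuations. Hence, by
induction on `k` along `φ_{j+1} = φ_j(w₀) + β_{j+1} φ_j(w₁)`, the two halves never cancel and the
valuation of `φ(w)` is that of one of its monomials. In the binary base case the cross term `w₀w₁`
cannot dominate, because `2ν(w₀w₁) = ν(w₀²) + ν(w₁²) > ν(w₀²) + ν(β₁w₁²)` when `ν(β₁) < 0`. -/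

open Function QuotientAddGroup

structure IsValuationOnUnits {F Γ : Type*} [Field F] [AddCommGroup Γ] [LinearOrder Γ]
    (ν : F → Γ) : Prop where
  map_mul : ∀ x y : F, x ≠ 0 → y ≠ 0 → ν (x * y) = ν x + ν y
  min_le_map_add : ∀ x y : F, x ≠ 0 → y ≠ 0 → x + y ≠ 0 → min (ν x) (ν y) ≤ ν (x + y)

namespace IsValuationOnUnits

variable {F Γ : Type*} [Field F] [AddCommGroup Γ] [LinearOrder Γ] {ν : F → Γ}

theorem map_one (hν : IsValuationOnUnits ν) : ν 1 = 0 := by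
  have h := hν.map_mul 1 1 one_ne_zero one_ne_zero
  rwa [one_mul, left_eq_add] at h

theorem map_sq (hν : IsValuationOnUnits ν) {c : F} (hc : c ≠ 0) : ν (c ^ 2) = ν c + ν c := by
  rw [sq, hν.map_mul c c hc hc]

theorem map_prod (hν : IsValuationOnUnits ν) {ι : Type*} (s : Finset ι) {g : ι → F}
    (hg : ∀ j ∈ s, g j ≠ 0) : ν (∏ j ∈ s, g j) = ∑ j ∈ s, ν (g j) := by
  classical
  induction s using Finset.induction_on with
  | empty => simpa using hν.map_one
  | insert a s ha ih =>
    have hs : ∀ j ∈ s, g j ≠ 0 := fun j hj => hg j (Finset.mem_insert_of_mem hj)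
    rw [Finset.prod_insert ha, Finset.sum_insert ha,
      hν.map_mul _ _ (hg a (Finset.mem_insert_self a s)) (Finset.prod_ne_zero_iff.2 hs), ih hs]

variable [IsOrderedAddMonoid Γ]

theorem map_neg (hν : IsValuationOnUnits ν) {x : F} (hx : x ≠ 0) : ν (-x) = ν x := by
  have hm1 : ν (-1) = 0 := by
    have h := hν.map_mul (-1) (-1) (neg_ne_zero.2 one_ne_zero) (neg_ne_zero.2 one_ne_zero)
    rw [neg_one_mul, neg_neg, hν.map_one, ← two_nsmul, eq_comm] at h
    exact two_nsmul_eq_zero.mp h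
  rw [neg_eq_neg_one_mul, hν.map_mul _ _ (neg_ne_zero.2 one_ne_zero) hx, hm1, zero_add]

theorem map_add_of_lt (hν : IsValuationOnUnits ν) {x y : F} (hx : x ≠ 0) (hy : y ≠ 0)
    (h : ν x < ν y) : x + y ≠ 0 ∧ ν (x + y) = ν x := by
  have hxy : x + y ≠ 0 := fun h0 => by
    rw [eq_neg_of_add_eq_zero_right h0, hν.map_neg hx] at h
    exact h.false
  refine ⟨hxy, le_antisymm ?_ ?_⟩
  · by_contra! hlt
    have h' := hν.min_le_map_add (x + y) (-y) hxy (neg_ne_zero.2 hy) (by simpa using hx)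
    rw [add_neg_cancel_right, hν.map_neg hy] at h'
    exact (lt_min hlt h).not_ge h'
  · simpa [min_eq_left h.le] using hν.min_le_map_add x y hx hy hxy

theorem map_add_of_ne (hν : IsValuationOnUnits ν) {x y : F} (hx : x ≠ 0) (hy : y ≠ 0)
    (h : ν x ≠ ν y) : x + y ≠ 0 ∧ ν (x + y) = min (ν x) (ν y) := by
  rcases h.lt_or_gt with h | h
  · simpa [min_eq_left h.le] using hν.map_add_of_lt hx hy h
  · simpa [add_comm x, min_eq_right h.le] using hν.map_add_of_lt hy hx h

theorem map_add_eq_or (hν : IsValuationOnUnits ν) {x y : F} (hxy : x ≠ 0 ∨ y ≠ 0)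
    (h : x ≠ 0 → y ≠ 0 → ν x ≠ ν y) :
    x + y ≠ 0 ∧ (x ≠ 0 ∧ ν (x + y) = ν x ∨ y ≠ 0 ∧ ν (x + y) = ν y) := by
  by_cases hx : x = 0
  · simp [hx, hxy.resolve_left (not_not.2 hx)]
  by_cases hy : y = 0
  · simp [hx, hy]
  obtain ⟨hne, hval⟩ := hν.map_add_of_ne hx hy (h hx hy)
  exact ⟨hne, (min_choice (ν x) (ν y)).imp (fun h' => ⟨hx, hval.trans h'⟩)
    (fun h' => ⟨hy, hval.trans h'⟩)⟩

theorem map_sq_add_mul_add_mul_sq (hν : IsValuationOnUnits ν) {a b β : F} (hab : a ≠ 0 ∨ b ≠ 0)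
    (hβ : β ≠ 0) (hβneg : ν β < 0) (hne : a ≠ 0 → b ≠ 0 → ν (a ^ 2) ≠ ν (β * b ^ 2)) :
    a ^ 2 + a * b + β * b ^ 2 ≠ 0 ∧
      (a ≠ 0 ∧ ν (a ^ 2 + a * b + β * b ^ 2) = ν (a ^ 2) ∨
        b ≠ 0 ∧ ν (a ^ 2 + a * b + β * b ^ 2) = ν (β * b ^ 2)) := by
  rw [add_right_comm]
  by_cases hab0 : a * b = 0
  · rw [hab0, add_zero]
    simpa [hβ] using hν.map_add_eq_or (by simpa [hβ] using hab)
      (fun ha hb => hne (by simpa using ha) (by simpa [hβ] using hb))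
  obtain ⟨ha, hb⟩ := mul_ne_zero_iff.1 hab0
  obtain ⟨hs, hsval⟩ := hν.map_add_of_ne (pow_ne_zero 2 ha) (mul_ne_zero hβ (pow_ne_zero 2 hb))
    (hne ha hb)
  have hcross : ν (a ^ 2 + β * b ^ 2) < ν (a * b) := by
    rw [hsval]
    refine lt_of_nsmul_lt_nsmul_right 2 ?_
    calc 2 • min (ν (a ^ 2)) (ν (β * b ^ 2))
        ≤ ν (a ^ 2) + ν (β * b ^ 2) := by
          rw [two_nsmul]; exact add_le_add (min_le_left _ _) (min_le_right _ _)
      _ < ν (a ^ 2) + ν (b ^ 2) := by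
        rw [hν.map_mul _ _ hβ (pow_ne_zero 2 hb), add_comm (ν β)]
        gcongr
        exact add_lt_of_neg_right _ hβneg
      _ = 2 • ν (a * b) := by
        rw [hν.map_mul a b ha hb, hν.map_sq ha, hν.map_sq hb, two_nsmul]; abel
  obtain ⟨hsum, hsumval⟩ := hν.map_add_of_lt hs hab0 hcross
  exact ⟨hsum, (min_choice _ _).imp (fun h => ⟨ha, by rw [hsumval, hsval, h]⟩)
    (fun h => ⟨hb, by rw [hsumval, hsval, h]⟩)⟩

end IsValuationOnUnits

section TwoTorsion

variable {G ι : Type*} [AddCommGroup G] [Fintype ι] {g : ι → G}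

theorem injective_sum_ite_of_add_self (h2 : ∀ x : G, x + x = 0)
    (hind : ∀ A : Finset ι, ∑ j ∈ A, g j = 0 → A = ∅) :
    Injective fun s : ι → Bool => ∑ j, if s j then g j else 0 := by
  classical
  intro s t hst
  have hdiff : ∑ j ∈ Finset.univ.filter (fun j => s j ≠ t j), g j = 0 := by
    rw [Finset.sum_filter]
    calc ∑ j, (if s j ≠ t j then g j else 0)
        = ∑ j, ((if s j then g j else 0) + if t j then g j else 0) := by
          refine Finset.sum_congr rfl fun j _ => ?_
          cases s j <;> cases t j <;> simp [h2]
      _ = 0 := by simp only [Finset.sum_add_distrib] at hst ⊢; rw [← hst, h2]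
  funext j
  by_contra hj
  exact hj (by simpa using Finset.eq_empty_iff_forall_notMem.1 (hind _ hdiff) j)

theorem mem_closure_range_iff_exists_sum_ite [DecidableEq ι] (h2 : ∀ x : G, x + x = 0) {x : G} :
    x ∈ AddSubgroup.closure (Set.range g) ↔ ∃ s : ι → Bool, x = ∑ j, if s j then g j else 0 := by
  refine ⟨fun hx => ?_, ?_⟩
  · induction hx using AddSubgroup.closure_induction with
    | mem _ hx =>
      obtain ⟨j, rfl⟩ := hx
      exact ⟨fun t => decide (t = j), by simp⟩
    | zero => exact ⟨fun _ => false, by simp⟩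
    | add _ _ _ _ hx hy =>
      obtain ⟨s, rfl⟩ := hx
      obtain ⟨t, rfl⟩ := hy
      refine ⟨fun j => xor (s j) (t j), ?_⟩
      rw [← Finset.sum_add_distrib]
      refine Finset.sum_congr rfl fun j _ => ?_
      cases hs : s j <;> cases ht : t j <;> simp [hs, ht, h2]
    | neg x _ hx => simpa [neg_eq_of_add_eq_zero_left (h2 x)] using hx
  · rintro ⟨s, rfl⟩
    refine AddSubgroup.sum_mem _ fun j _ => ?_
    split_ifs
    exacts [AddSubgroup.subset_closure ⟨j, rfl⟩, zero_mem _]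

end TwoTorsion

theorem twoSubgroup_add_self {Γ : Type*} [AddCommGroup Γ] (x : Γ ⧸ twoSubgroup Γ) : x + x = 0 :=
  QuotientAddGroup.induction_on x fun a =>
    (eq_zero_iff _).2 (AddSubgroup.subset_closure ⟨a, rfl⟩)

section Pfister

variable {F : Type*} [Field F]

def pfisterCoeff {k : ℕ} (β : Fin k → F) (i : Fin k → Bool) : F :=
  ∏ j, if i j then β j else 1

theorem pfisterCoeff_ne_zero {k : ℕ} {β : Fin k → F} (hβ : ∀ j, β j ≠ 0) (i : Fin k → Bool) :
    pfisterCoeff β i ≠ 0 :=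
  Finset.prod_ne_zero_iff.2 fun j _ => by split_ifs <;> simp [hβ]

theorem pfisterCoeff_snoc {n : ℕ} (β : Fin (n + 1) → F) (i : Fin n → Bool) (b : Bool) :
    pfisterCoeff β (Fin.snoc i b) =
      pfisterCoeff (fun j => β j.castSucc) i * if b then β (Fin.last n) else 1 := by
  simp [pfisterCoeff, Fin.prod_univ_castSucc]

theorem pfisterFun_zero_right (m : ℕ) (β : Fin (m + 1) → F) : pfisterFun m β 0 = 0 := by
  induction m with
  | zero => simp [pfisterFun]
  | succ n ih => simp [pfisterFun, ← Pi.zero_def, ih]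

theorem pi_single_snoc_apply {n : ℕ} (i t : Fin n → Bool) (b b' : Bool) (c : F) :
    (Pi.single (Fin.snoc i b) c : (Fin (n + 1) → Bool) → F) (Fin.snoc t b') =
      if b' = b then (Pi.single i c : (Fin n → Bool) → F) t else 0 := by
  simp only [Pi.single_apply, Fin.snoc_injective2.eq_iff]
  split_ifs <;> tauto

theorem pfisterFun_single (m : ℕ) (β : Fin (m + 1) → F) (i : Fin (m + 1) → Bool) (c : F) :
    pfisterFun m β (Pi.single i c) = c ^ 2 * pfisterCoeff β i := by
  induction m with
  | zero =>
    obtain ⟨b, rfl⟩ : ∃ b, i = fun _ => b := ⟨i 0, funext fun j => by rw [Fin.fin_one_eq_zero j]⟩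
    cases b <;> simp [pfisterFun, pfisterCoeff, funext_iff, mul_comm]
  | succ n ih =>
    induction i using Fin.snocCases with
    | _ i b =>
      cases b <;> simp [pfisterFun, pi_single_snoc_apply, ← Pi.zero_def, pfisterFun_zero_right, ih,
        pfisterCoeff_snoc, mul_comm (β _), mul_assoc]

end Pfister

theorem exists_ne_zero_comp_snoc {M : Type*} [Zero M] {n : ℕ} {w : (Fin (n + 1) → Bool) → M}
    (hw : w ≠ 0) : ∃ b, (fun t => w (Fin.snoc t b)) ≠ 0 := by
  obtain ⟨i, hi⟩ := Function.ne_iff.1 hw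
  exact ⟨i (Fin.last n), Function.ne_iff.2 ⟨Fin.init i, by simpa [Fin.snoc_init_self] using hi⟩⟩

namespace IsValuationOnUnits

variable {F Γ : Type*} [Field F] [AddCommGroup Γ] [LinearOrder Γ] {ν : F → Γ}

theorem mk_map_sq_mul (hν : IsValuationOnUnits ν) {c x : F} (hc : c ≠ 0) (hx : x ≠ 0) :
    mk' (twoSubgroup Γ) (ν (c ^ 2 * x)) = mk' (twoSubgroup Γ) (ν x) := by
  rw [hν.map_mul _ _ (pow_ne_zero 2 hc) hx, hν.map_sq hc, map_add, map_add, twoSubgroup_add_self,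
    zero_add]

theorem mk_map_pfisterCoeff (hν : IsValuationOnUnits ν) {k : ℕ} {β : Fin k → F}
    (hβ : ∀ j, β j ≠ 0) (i : Fin k → Bool) :
    mk' (twoSubgroup Γ) (ν (pfisterCoeff β i)) =
      ∑ j, if i j then mk' (twoSubgroup Γ) (ν (β j)) else 0 := by
  rw [pfisterCoeff, hν.map_prod _ fun j _ => by split_ifs <;> simp [hβ], map_sum]
  refine Finset.sum_congr rfl fun j _ => ?_
  split_ifs <;> simp [hν.map_one]

theorem eq_of_map_sq_mul_pfisterCoeff_eq (hν : IsValuationOnUnits ν) {k : ℕ} {β : Fin k → F}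
    (hβ : ∀ j, β j ≠ 0) (hsep : Injective fun i => mk' (twoSubgroup Γ) (ν (pfisterCoeff β i)))
    {i i' : Fin k → Bool} {c c' : F} (hc : c ≠ 0) (hc' : c' ≠ 0)
    (h : ν (c ^ 2 * pfisterCoeff β i) = ν (c' ^ 2 * pfisterCoeff β i')) : i = i' :=
  hsep <| by
    simpa only [hν.mk_map_sq_mul hc (pfisterCoeff_ne_zero hβ i),
      hν.mk_map_sq_mul hc' (pfisterCoeff_ne_zero hβ i')] using congrArg (mk' (twoSubgroup Γ)) h

variable [IsOrderedAddMonoid Γ]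

theorem exists_map_pfisterFun_zero_eq (hν : IsValuationOnUnits ν) (β : Fin 1 → F)
    (hβ : ∀ j, β j ≠ 0) (hβ0 : ν (β 0) < 0)
    (hsep : Injective fun i => mk' (twoSubgroup Γ) (ν (pfisterCoeff β i)))
    {w : (Fin 1 → Bool) → F} (hw : w ≠ 0) :
    ∃ i, w i ≠ 0 ∧ pfisterFun 0 β w ≠ 0 ∧
      ν (pfisterFun 0 β w) = ν (w i ^ 2 * pfisterCoeff β i) := by
  have hab : w (fun _ => false) ≠ 0 ∨ w (fun _ => true) ≠ 0 := by
    obtain ⟨i, hi⟩ := Function.ne_iff.1 hw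
    obtain ⟨b, rfl⟩ : ∃ b, i = fun _ => b := ⟨i 0, funext fun j => by rw [Fin.fin_one_eq_zero j]⟩
    cases b <;> tauto
  have hne : w (fun _ => false) ≠ 0 → w (fun _ => true) ≠ 0 →
      ν (w (fun _ => false) ^ 2) ≠ ν (β 0 * w (fun _ => true) ^ 2) := fun ha hb h => by
    simpa [funext_iff] using
      hν.eq_of_map_sq_mul_pfisterCoeff_eq hβ hsep (i := fun _ => false) (i' := fun _ => true)
        ha hb (by simpa [pfisterCoeff, mul_comm] using h)
  obtain ⟨hφ, h | h⟩ := hν.map_sq_add_mul_add_mul_sq hab (hβ 0) hβ0 hne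
  · exact ⟨fun _ => false, h.1, hφ, by simpa [pfisterCoeff, pfisterFun, mul_comm] using h.2⟩
  · exact ⟨fun _ => true, h.1, hφ, by simpa [pfisterCoeff, pfisterFun, mul_comm] using h.2⟩

theorem exists_map_pfisterFun_eq (hν : IsValuationOnUnits ν) {m : ℕ} (β : Fin (m + 1) → F)
    (hβ : ∀ j, β j ≠ 0) (hβ0 : ν (β 0) < 0)
    (hsep : Injective fun i => mk' (twoSubgroup Γ) (ν (pfisterCoeff β i)))
    {w : (Fin (m + 1) → Bool) → F} (hw : w ≠ 0) :
    ∃ i, w i ≠ 0 ∧ pfisterFun m β w ≠ 0 ∧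
      ν (pfisterFun m β w) = ν (w i ^ 2 * pfisterCoeff β i) := by
  induction m with
  | zero => exact hν.exists_map_pfisterFun_zero_eq β hβ hβ0 hsep hw
  | succ n ih =>
    set β' : Fin (n + 1) → F := fun j => β j.castSucc
    have hsep' : Injective fun i => mk' (twoSubgroup Γ) (ν (pfisterCoeff β' i)) := fun i i' h =>
      (Fin.snoc_injective2 (hsep (a₁ := Fin.snoc i false) (a₂ := Fin.snoc i' false)
        (by simpa [pfisterCoeff_snoc] using h))).1
    set z : Bool → F := fun b =>
      (if b then β (Fin.last (n + 1)) else 1) * pfisterFun n β' fun t => w (Fin.snoc t b)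
    have hφ : pfisterFun (n + 1) β w = z false + z true := by simp [z, pfisterFun, β']
    have hz : ∀ b, (fun t => w (Fin.snoc t b)) ≠ 0 → ∃ i, w (Fin.snoc i b) ≠ 0 ∧ z b ≠ 0 ∧
        ν (z b) = ν (w (Fin.snoc i b) ^ 2 * pfisterCoeff β (Fin.snoc i b)) := by
      intro b hb
      obtain ⟨i, hi, hφi, hval⟩ := ih β' (fun j => hβ _) (by simpa [β'] using hβ0) hsep' hb
      have hcoef : (if b then β (Fin.last (n + 1)) else 1) ≠ 0 := by split_ifs <;> simp [hβ]
      refine ⟨i, hi, mul_ne_zero hcoef hφi, ?_⟩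
      rw [hν.map_mul _ _ hcoef hφi, hval, pfisterCoeff_snoc, ← hν.map_mul _ _ hcoef
        (mul_ne_zero (pow_ne_zero 2 hi) (pfisterCoeff_ne_zero (fun j => hβ _) i))]
      ring_nf
    have hz0 : ∀ b, z b ≠ 0 → (fun t => w (Fin.snoc t b)) ≠ 0 := fun b hb h0 =>
      hb (by simp [z, h0, pfisterFun_zero_right])
    have hzne : z false ≠ 0 ∨ z true ≠ 0 := by
      obtain ⟨b, hb⟩ := exists_ne_zero_comp_snoc hw
      cases b
      exacts [Or.inl (hz _ hb).choose_spec.2.1, Or.inr (hz _ hb).choose_spec.2.1]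
    -- the leading monomials of the two halves differ in the last index, hence in class mod `2Γ`
    have hsplit : z false ≠ 0 → z true ≠ 0 → ν (z false) ≠ ν (z true) := fun h0 h1 h => by
      obtain ⟨i₀, hi₀, -, hval₀⟩ := hz false (hz0 false h0)
      obtain ⟨i₁, hi₁, -, hval₁⟩ := hz true (hz0 true h1)
      rw [hval₀, hval₁] at h
      simpa using (Fin.snoc_injective2 (hν.eq_of_map_sq_mul_pfisterCoeff_eq hβ hsep hi₀ hi₁ h)).2
    obtain ⟨hsum, h | h⟩ := hν.map_add_eq_or hzne hsplit
    · obtain ⟨i, hi, -, hval⟩ := hz false (hz0 false h.1)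
      exact ⟨_, hi, hφ ▸ hsum, by rw [hφ, h.2, hval]⟩
    · obtain ⟨i, hi, -, hval⟩ := hz true (hz0 true h.1)
      exact ⟨_, hi, hφ ▸ hsum, by rw [hφ, h.2, hval]⟩

end IsValuationOnUnits

theorem pfister_valuation_monomial_values_general {F : Type*} [Field F]
    {Γ : Type*} [AddCommGroup Γ] [LinearOrder Γ] [IsOrderedAddMonoid Γ]
    (ν : F → Γ)
    (hmul : ∀ x y : F, x ≠ 0 → y ≠ 0 → ν (x * y) = ν x + ν y)
    (hadd : ∀ x y : F, x ≠ 0 → y ≠ 0 → x + y ≠ 0 → min (ν x) (ν y) ≤ ν (x + y))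
    (m : ℕ) (β : Fin (m + 1) → F) (hβ0 : ∀ i, β i ≠ 0)
    (hneg : ν (β 0) < 0)
    (hind : ∀ A : Finset (Fin (m + 1)),
      (∑ i ∈ A, QuotientAddGroup.mk' (twoSubgroup Γ) (ν (β i))) = 0 → A = ∅) :
    (∀ w : (Fin (m + 1) → Bool) → F, w ≠ 0 → ∃ i : Fin (m + 1) → Bool, w i ≠ 0 ∧
        ν (pfisterFun m β w) =
          ν (pfisterFun m β (fun j => if j = i then w i else 0))) ∧
    (∀ w : (Fin (m + 1) → Bool) → F, w ≠ 0 → pfisterFun m β w ≠ 0) ∧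
    {c : Γ ⧸ twoSubgroup Γ | ∃ w : (Fin (m + 1) → Bool) → F,
        pfisterFun m β w ≠ 0 ∧ c = QuotientAddGroup.mk' (twoSubgroup Γ) (ν (pfisterFun m β w))} =
      (AddSubgroup.closure
        (Set.range fun i : Fin (m + 1) => QuotientAddGroup.mk' (twoSubgroup Γ) (ν (β i))) :
          Set (Γ ⧸ twoSubgroup Γ)) := by
  have hν : IsValuationOnUnits ν := ⟨hmul, hadd⟩
  have hclass := hν.mk_map_pfisterCoeff hβ0
  have hsep : Injective fun i => mk' (twoSubgroup Γ) (ν (pfisterCoeff β i)) := by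
    simpa only [hclass] using injective_sum_ite_of_add_self twoSubgroup_add_self hind
  have key := fun w (hw : w ≠ 0) => hν.exists_map_pfisterFun_eq β hβ0 hneg hsep hw
  refine ⟨fun w hw => ?_, fun w hw => (key w hw).choose_spec.2.1, ?_⟩
  · obtain ⟨i, hi, -, hval⟩ := key w hw
    have hsingle : (fun j => if j = i then w i else 0) = Pi.single i (w i) :=
      funext fun j => (Pi.single_apply i (w i) j).symm
    exact ⟨i, hi, by rw [hval, hsingle, pfisterFun_single]⟩
  ext c
  simp only [Set.mem_ofPred_eq, SetLike.mem_coe,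
    mem_closure_range_iff_exists_sum_ite twoSubgroup_add_self]
  constructor
  · rintro ⟨w, hφ, rfl⟩
    obtain ⟨i, hi, -, hval⟩ := key w fun h => hφ (h ▸ pfisterFun_zero_right m β)
    exact ⟨i, by rw [hval, hν.mk_map_sq_mul hi (pfisterCoeff_ne_zero hβ0 i), hclass]⟩
  · rintro ⟨i, rfl⟩
    refine ⟨Pi.single i 1, ?_, ?_⟩ <;> rw [pfisterFun_single, one_pow, one_mul]
    exacts [pfisterCoeff_ne_zero hβ0 i, (hclass i).symm]

/-- Lemma 9.1: let `F` be a field of characteristic 2 with a valuation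
`ν : F^× → Γ` to a totally ordered abelian group `Γ`.  Fix `k = m + 1 ≥ 1` and
`β₁,…,β_k ∈ F^×` (here `β i = β_{i+1}`) with `ν(β₁) < 0` and the images of
`ν(β₁),…,ν(β_k)` in `Γ/2Γ` linearly independent over `𝔽₂`.  Let
`φ = ⟪β_k,…,β₂,β₁]]` on the space `W` with its monomial basis.  Then:
(1) for every nonzero `w ∈ W` there is an index `𝐢` with `w_𝐢 ≠ 0` and
`ν(φ(w)) = ν(φ(w_𝐢 e_𝐢))`; (2) `φ` is anisotropic; (3) the set of classes mod `2Γ` of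
the nonzero values of `φ` is exactly the `𝔽₂`-subspace of `Γ/2Γ` spanned by the
`ν(βᵢ)`. -/
theorem pfister_valuation_monomial_values {F : Type*} [Field F] [CharP F 2]
    {Γ : Type*} [AddCommGroup Γ] [LinearOrder Γ] [IsOrderedAddMonoid Γ]
    (ν : F → Γ)
    (hmul : ∀ x y : F, x ≠ 0 → y ≠ 0 → ν (x * y) = ν x + ν y)
    (hadd : ∀ x y : F, x ≠ 0 → y ≠ 0 → x + y ≠ 0 → min (ν x) (ν y) ≤ ν (x + y))
    (m : ℕ) (β : Fin (m + 1) → F) (hβ0 : ∀ i, β i ≠ 0)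
    (hneg : ν (β 0) < 0)
    (hind : ∀ A : Finset (Fin (m + 1)),
      (∑ i ∈ A, QuotientAddGroup.mk' (twoSubgroup Γ) (ν (β i))) = 0 → A = ∅) :
    (∀ w : (Fin (m + 1) → Bool) → F, w ≠ 0 → ∃ i : Fin (m + 1) → Bool, w i ≠ 0 ∧
        ν (pfisterFun m β w) =
          ν (pfisterFun m β (fun j => if j = i then w i else 0))) ∧
    (∀ w : (Fin (m + 1) → Bool) → F, w ≠ 0 → pfisterFun m β w ≠ 0) ∧
    {c : Γ ⧸ twoSubgroup Γ | ∃ w : (Fin (m + 1) → Bool) → F,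
        pfisterFun m β w ≠ 0 ∧ c = QuotientAddGroup.mk' (twoSubgroup Γ) (ν (pfisterFun m β w))} =
      (AddSubgroup.closure
        (Set.range fun i : Fin (m + 1) => QuotientAddGroup.mk' (twoSubgroup Γ) (ν (β i))) :
          Set (Γ ⧸ twoSubgroup Γ)) :=
  pfister_valuation_monomial_values_general ν hmul hadd m β hβ0 hneg hind
end
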